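/- arXiv:1202.4045 — 2 statements merged into one kernel-verified Lean document; each statement's English description precedes it below -/
import Mathlib

section
/- Let P be a simple polytope of dimension d > 1 with precisely 2d facets. Then the pairs of complementary vertices of P are pairwise disjoint: if {u, v} and {u, w} are both pairs of complementary vertices of P, then v = w. -/
/-
Since `P` is simple, the `d` facets through `v` avoid the `d` facets through its complementary
vertex `u`, so with `2d` facets in total they are exactly the facets missing `u`; the same holds
for `w`, hence `v` and `w` lie on the same facets. But a vertex is determined by the facets through
it: `P` is cut out of its affine hull by its facet inequalities, so if every facet through `v`
contained some `w ≠ v`, the points slightly beyond `v` on the ray from `w` would still lie in `P`,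
contradicting that `v` is exposed. The facet description comes from tilting a separating
supporting hyperplane about its face until the face is a facet; a facet inequality is unique up to
positive scaling on the affine hull, so it does not matter which one represents a facet.
-/

/-- `P` is a polytope: the convex hull of finitely many points. -/
def IsPolytope {n : ℕ} (P : Set (Fin n → ℝ)) : Prop :=
  ∃ S : Finset (Fin n → ℝ), P = convexHull ℝ (S : Set (Fin n → ℝ))

/-- A face of `P`: the empty set, `P` itself, or the intersection of `P`
with a supporting hyperplane. -/
def IsFace {n : ℕ} (P F : Set (Fin n → ℝ)) : Prop :=
  F = ∅ ∨ F = P ∨ ∃ (f : (Fin n → ℝ) →ₗ[ℝ] ℝ) (c : ℝ),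
    (∀ x ∈ P, f x ≤ c) ∧ F = {x ∈ P | f x = c}

/-- The dimension of a subset of `ℝⁿ`: the rank of its vector span
(i.e., its affine dimension). -/
noncomputable def sdim {n : ℕ} (F : Set (Fin n → ℝ)) : ℕ :=
  Module.finrank ℝ ↥(vectorSpan ℝ F)

/-- A vertex of `P`: a point whose singleton is a (0-dimensional) face of `P`. -/
def IsVertex {n : ℕ} (P : Set (Fin n → ℝ)) (v : Fin n → ℝ) : Prop :=
  IsFace P {v}

/-- A facet of `P`: a nonempty face of dimension `dim P - 1`. -/
def IsFacet {n : ℕ} (P F : Set (Fin n → ℝ)) : Prop :=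
  IsFace P F ∧ F.Nonempty ∧ sdim F + 1 = sdim P

/-- An edge of `P`: a face of dimension 1. -/
def IsEdge {n : ℕ} (P F : Set (Fin n → ℝ)) : Prop :=
  IsFace P F ∧ sdim F = 1

/-- Two vertices are adjacent if they are joined by an edge. -/
def Adjacent {n : ℕ} (P : Set (Fin n → ℝ)) (u v : Fin n → ℝ) : Prop :=
  u ≠ v ∧ ∃ F, IsEdge P F ∧ u ∈ F ∧ v ∈ F

/-- A polytope is simple if every vertex belongs to precisely `dim P` facets. -/
def IsSimplePolytope {n : ℕ} (P : Set (Fin n → ℝ)) : Prop :=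
  ∀ v, IsVertex P v → {F | IsFacet P F ∧ v ∈ F}.ncard = sdim P

/-- A polytope is simplicial if every facet contains precisely `dim P` vertices. -/
def IsSimplicialPolytope {n : ℕ} (P : Set (Fin n → ℝ)) : Prop :=
  ∀ F, IsFacet P F → {v | IsVertex P v ∧ v ∈ F}.ncard = sdim P

/-- Two vertices are complementary if no facet contains both. -/
def Complementary {n : ℕ} (P : Set (Fin n → ℝ)) (u v : Fin n → ℝ) : Prop :=
  ∀ F, IsFacet P F → ¬ (u ∈ F ∧ v ∈ F)

/-- `J` is the join `F ∨ G`: the smallest face of `P` containing both `F` and `G`. -/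
def IsJoin {n : ℕ} (P F G J : Set (Fin n → ℝ)) : Prop :=
  IsFace P J ∧ F ⊆ J ∧ G ⊆ J ∧ ∀ J', IsFace P J' → F ⊆ J' → G ⊆ J' → J ⊆ J'

open Module Filter Topology

section LinearAlgebra

variable {V : Type*} [AddCommGroup V] [Module ℝ V]

lemma exists_dual_pos_of_notMem {W : Submodule ℝ V} {a : V} (ha : a ∉ W) :
    ∃ g : V →ₗ[ℝ] ℝ, W ≤ LinearMap.ker g ∧ 0 < g a := by
  obtain ⟨g, hga, hW⟩ := W.exists_dual_map_eq_bot_of_notMem ha inferInstance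
  rw [← LinearMap.le_ker_iff_map] at hW
  rcases hga.lt_or_gt with hneg | hpos
  · exact ⟨-g, by rwa [LinearMap.ker_neg], by simpa using hneg⟩
  · exact ⟨g, hW, hpos⟩

lemma vectorSpan_le_ker_of_eqOn {A : Set V} {f : V →ₗ[ℝ] ℝ} {c : ℝ} (h : ∀ x ∈ A, f x = c) :
    vectorSpan ℝ A ≤ LinearMap.ker f := by
  rw [vectorSpan_def, Submodule.span_le]
  rintro _ ⟨x, hx, y, hy, rfl⟩
  simp [h x hx, h y hy]

lemma apply_eq_of_mem_affineSpan {A : Set V} {f : V →ₗ[ℝ] ℝ} {c : ℝ} (h : ∀ x ∈ A, f x = c)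
    {z : V} (hz : z ∈ affineSpan ℝ A) : f z = c := by
  refine affineSpan_induction (p := fun y => f y = c) hz h fun r u v w hu hv hw => ?_
  simp [hu, hv, hw]

lemma vectorSpan_inf_ker_lt {A : Set V} {f : V →ₗ[ℝ] ℝ} {x y : V} (hx : x ∈ A) (hy : y ∈ A)
    (hxy : f x ≠ f y) : vectorSpan ℝ A ⊓ LinearMap.ker f < vectorSpan ℝ A :=
  inf_lt_left.2 fun h => hxy <| by
    simpa [sub_eq_zero] using h (vsub_mem_vectorSpan ℝ hx hy)

lemma le_of_mem_convexHull {S : Set V} {f : V →ₗ[ℝ] ℝ} {c : ℝ} (h : ∀ s ∈ S, f s ≤ c) {x : V}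
    (hx : x ∈ convexHull ℝ S) : f x ≤ c :=
  convexHull_min h (convex_halfSpace_le f.isLinear c) hx

end LinearAlgebra

open Finset in
lemma Finset.exists_forall_mul_le_and_card_lt {α : Type*} (T : Finset α) (φ ψ : α → ℝ)
    (hφ : ∀ s ∈ T, 0 ≤ φ s) (hψ : ∀ s ∈ T, φ s = 0 → ψ s = 0) (hpos : ∃ s ∈ T, 0 < ψ s) :
    ∃ t : ℝ, (∀ s ∈ T, t * ψ s ≤ φ s) ∧ #{s ∈ T | t * ψ s ≠ φ s} < #{s ∈ T | φ s ≠ 0} := by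
  obtain ⟨s₀, hs₀, hmin⟩ := ({s ∈ T | 0 < ψ s} : Finset α).exists_min_image (fun s => φ s / ψ s)
    (by simpa [Finset.Nonempty] using hpos)
  rw [mem_filter] at hs₀
  refine ⟨φ s₀ / ψ s₀, fun s hs => ?_, card_lt_card ⟨fun s => ?_, fun hsub => ?_⟩⟩
  · rcases lt_or_ge 0 (ψ s) with hψs | hψs
    · exact (le_div_iff₀ hψs).1 (hmin s (mem_filter.2 ⟨hs, hψs⟩))
    · exact (mul_nonpos_of_nonneg_of_nonpos (div_nonneg (hφ s₀ hs₀.1) hs₀.2.le) hψs).trans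
        (hφ s hs)
  · simp only [mem_filter, and_imp]
    intro hs hne
    refine ⟨hs, fun h0 => hne ?_⟩
    rw [hψ s hs h0, h0, mul_zero]
  · have hφs₀ : φ s₀ ≠ 0 := fun h0 => hs₀.2.ne' (hψ s₀ hs₀.1 h0)
    have := (mem_filter.1 (hsub (mem_filter.2 ⟨hs₀.1, hφs₀⟩))).2
    exact this (div_mul_cancel₀ _ hs₀.2.ne')

section Polytope

variable {n : ℕ} {P F : Set (Fin n → ℝ)}

lemma IsVertex.mem {v : Fin n → ℝ} (hv : IsVertex P v) : v ∈ P := by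
  rcases hv with h | h | ⟨f, c, -, h⟩
  · exact absurd h (Set.singleton_ne_empty v)
  · exact h ▸ rfl
  · exact (h.subset rfl).1

lemma IsFacet.exists_eq_setOf (hF : IsFacet P F) :
    ∃ (g : (Fin n → ℝ) →ₗ[ℝ] ℝ) (e : ℝ), (∀ x ∈ P, g x ≤ e) ∧ F = {x ∈ P | g x = e} := by
  obtain ⟨hface | hface | hface, hne, hdim⟩ := hF
  · exact absurd hface hne.ne_empty
  · subst hface; omega
  · exact hface

lemma IsFacet.exists_mem_notMem (hF : IsFacet P F) : ∃ x ∈ P, x ∉ F := by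
  by_contra! hPF
  have := Submodule.finrank_mono (vectorSpan_mono ℝ hPF)
  have := hF.2.2
  unfold sdim at this
  omega

lemma vectorSpan_eq_inf_ker_of_isFacet {g : (Fin n → ℝ) →ₗ[ℝ] ℝ} {e : ℝ}
    (hF : IsFacet P {x ∈ P | g x = e}) :
    vectorSpan ℝ {x ∈ P | g x = e} = vectorSpan ℝ P ⊓ LinearMap.ker g := by
  obtain ⟨x, hxP, hx⟩ := hF.exists_mem_notMem
  obtain ⟨-, ⟨p, hpP, hp⟩, hdim⟩ := hF
  have hlt := Submodule.finrank_lt_finrank_of_lt <|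
    vectorSpan_inf_ker_lt (f := g) hxP hpP (hp ▸ fun h => hx ⟨hxP, h⟩)
  refine Submodule.eq_of_le_of_finrank_le
    (le_inf (vectorSpan_mono ℝ fun x hx => hx.1) (vectorSpan_le_ker_of_eqOn fun x hx => hx.2)) ?_
  unfold sdim at hdim
  omega

lemma lt_of_lt_of_facet_eq {g g' : (Fin n → ℝ) →ₗ[ℝ] ℝ} {e e' : ℝ}
    (hg : ∀ x ∈ P, g x ≤ e) (hg' : ∀ x ∈ P, g' x ≤ e') (hF : IsFacet P {x ∈ P | g x = e})
    (heq : {x ∈ P | g x = e} = {x ∈ P | g' x = e'}) {y : Fin n → ℝ} (hy : y ∈ affineSpan ℝ P)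
    (hgy : e < g y) : e' < g' y := by
  obtain ⟨x₁, hx₁P, hx₁⟩ := hF.exists_mem_notMem
  obtain ⟨p, hpP, hp⟩ := hF.2.1
  have hp' : g' p = e' := (heq ▸ ⟨hpP, hp⟩ : p ∈ {x ∈ P | g' x = e'}).2
  have hgx₁ : g x₁ < e := (hg x₁ hx₁P).lt_of_ne fun h => hx₁ ⟨hx₁P, h⟩
  have hg'x₁ : g' x₁ < e' := (hg' x₁ hx₁P).lt_of_ne fun h => hx₁ (heq ▸ ⟨hx₁P, h⟩)
  -- `y - p` and `x₁ - p` are proportional modulo the direction of the facet, which lies in both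
  -- kernels, and `x₁` is strictly below both hyperplanes.
  have hb : g (x₁ - p) < 0 := by simp [hp, hgx₁]
  set r := g (y - p) / g (x₁ - p)
  have hr : r < 0 := div_neg_of_pos_of_neg (by simp [hp, hgy]) hb
  have hmem : y - p - r • (x₁ - p) ∈ vectorSpan ℝ {x ∈ P | g x = e} := by
    rw [vectorSpan_eq_inf_ker_of_isFacet hF]
    refine Submodule.mem_inf.2
      ⟨Submodule.sub_mem _ ?_ (Submodule.smul_mem _ _ (vsub_mem_vectorSpan ℝ hx₁P hpP)), ?_⟩
    · rw [← direction_affineSpan]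
      exact AffineSubspace.vsub_mem_direction hy (subset_affineSpan ℝ P hpP)
    · rw [LinearMap.mem_ker, map_sub, map_smul, smul_eq_mul, div_mul_cancel₀ _ hb.ne, sub_self]
  rw [heq] at hmem
  have := vectorSpan_le_ker_of_eqOn (fun x hx => hx.2) hmem
  simp only [LinearMap.mem_ker, map_sub, map_smul, smul_eq_mul, hp'] at this
  nlinarith

open Finset in
lemma exists_facet_lt_of_supporting {S : Finset (Fin n → ℝ)} (hP : P = convexHull ℝ ↑S)
    {z : Fin n → ℝ} (hz : z ∈ affineSpan ℝ P) (f : (Fin n → ℝ) →ₗ[ℝ] ℝ) (c : ℝ)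
    (hfS : ∀ s ∈ S, f s ≤ c) (hface : ∃ s ∈ S, f s = c) (hfz : c < f z) :
    ∃ (g : (Fin n → ℝ) →ₗ[ℝ] ℝ) (e : ℝ),
      (∀ x ∈ P, g x ≤ e) ∧ IsFacet P {x ∈ P | g x = e} ∧ e < g z := by
  induction hk : #{s ∈ S | f s ≠ c} using Nat.strong_induction_on generalizing f c with
  | _ k ih =>
  obtain ⟨p, hpS, hp⟩ := hface
  have hSP : ∀ s ∈ S, s ∈ P := fun s hs => hP ▸ subset_convexHull ℝ _ hs
  have hfP : ∀ x ∈ P, f x ≤ c := fun x hx => le_of_mem_convexHull hfS (hP ▸ hx)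
  have hpF : p ∈ {x ∈ P | f x = c} := ⟨hSP p hpS, hp⟩
  by_cases hfacet : IsFacet P {x ∈ P | f x = c}
  · exact ⟨f, c, hfP, hfacet, hfz⟩
  have hlt : sdim {x ∈ P | f x = c} < sdim P := by
    obtain ⟨x, hxP, hx⟩ : ∃ x ∈ P, f x ≠ c := by
      by_contra! h
      exact hfz.ne' (apply_eq_of_mem_affineSpan h hz)
    refine (Submodule.finrank_mono (le_inf (vectorSpan_mono ℝ fun x hx => hx.1)
      (vectorSpan_le_ker_of_eqOn fun x hx => hx.2))).trans_lt
      (Submodule.finrank_lt_finrank_of_lt (vectorSpan_inf_ker_lt hxP hpF.1 (hp ▸ hx)))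
  have hsdim : sdim {x ∈ P | f x = c} + 1 < sdim P := by
    have : sdim {x ∈ P | f x = c} + 1 ≠ sdim P := fun h =>
      hfacet ⟨Or.inr (Or.inr ⟨f, c, hfP, rfl⟩), ⟨p, hpF⟩, h⟩
    omega
  -- Tilt the hyperplane about the face in a direction `g` vanishing on the face and on `z - p`
  -- (so `z` stays beyond it) until it meets a further point of `S`; the dimension gap leaves room
  -- for a `g` that is not constant on `S`.
  set W := vectorSpan ℝ {x ∈ P | f x = c} ⊔ ℝ ∙ (z - p)
  have hW : finrank ℝ W < sdim P := by
    have hsup : finrank ℝ W ≤ finrank ℝ (vectorSpan ℝ {x ∈ P | f x = c}) +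
        finrank ℝ (ℝ ∙ (z - p)) :=
      Submodule.finrank_add_le_finrank_add_finrank _ _
    have hline := finrank_span_le_card (R := ℝ) ({z - p} : Set (Fin n → ℝ))
    simp only [Set.toFinset_singleton, card_singleton] at hline
    unfold sdim at hsdim ⊢
    omega
  obtain ⟨s, hsS, hs⟩ : ∃ s ∈ S, s - p ∉ W := by
    by_contra! h
    refine hW.not_ge (Submodule.finrank_mono ?_)
    rw [hP, ← direction_affineSpan, affineSpan_convexHull, direction_affineSpan,
      vectorSpan_eq_span_vsub_set_right ℝ (mem_coe.2 hpS), Submodule.span_le]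
    rintro _ ⟨s, hs, rfl⟩
    exact h s hs
  obtain ⟨g, hgW, hgs⟩ := exists_dual_pos_of_notMem hs
  have hgF : ∀ x ∈ {x ∈ P | f x = c}, g (x - p) = 0 := fun x hx =>
    hgW (Submodule.mem_sup_left (vsub_mem_vectorSpan ℝ hx hpF))
  have hgz : g (z - p) = 0 := hgW (Submodule.mem_sup_right (Submodule.mem_span_singleton_self _))
  obtain ⟨t, hle, hcard⟩ := S.exists_forall_mul_le_and_card_lt (fun s => c - f s)
    (fun s => g (s - p)) (fun s hs => sub_nonneg.2 (hfS s hs))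
    (fun s hs h0 => hgF s ⟨hSP s hs, by linarith⟩) ⟨s, hsS, hgs⟩
  have htilt : ∀ s, (f + t • g) s - (c + t * g p) = t * g (s - p) - (c - f s) := fun s => by
    simp only [LinearMap.add_apply, LinearMap.smul_apply, smul_eq_mul, map_sub]
    ring
  refine ih _ ?_ (f + t • g) (c + t * g p) (fun s hs => ?_) ⟨p, hpS, by simp [hp]⟩ ?_ rfl
  · rw [← hk]
    convert hcard using 2
    · ext s
      simp only [mem_filter]
      rw [← sub_ne_zero, htilt, sub_ne_zero]
    · ext s
      simp only [mem_filter, sub_ne_zero, ne_comm (a := f s)]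
  · linarith [hle s hs, htilt s]
  · have := htilt z
    rw [hgz, mul_zero] at this
    linarith

lemma exists_facet_lt_of_notMem (hP : IsPolytope P) {z : Fin n → ℝ}
    (hz : z ∈ affineSpan ℝ P) (hzP : z ∉ P) :
    ∃ (g : (Fin n → ℝ) →ₗ[ℝ] ℝ) (e : ℝ),
      (∀ x ∈ P, g x ≤ e) ∧ IsFacet P {x ∈ P | g x = e} ∧ e < g z := by
  obtain ⟨S, rfl⟩ := hP
  obtain ⟨f, a, hfP, hfz⟩ := geometric_hahn_banach_closed_point (convex_convexHull ℝ _)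
    (S.finite_toSet.isClosed_convexHull (𝕜 := ℝ)) hzP
  have hS : S.Nonempty := by
    simpa using (affineSpan_nonempty ℝ).1 ⟨z, hz⟩
  obtain ⟨s₀, hs₀, hmax⟩ := S.exists_max_image f hS
  exact exists_facet_lt_of_supporting rfl hz f (f s₀) hmax ⟨s₀, hs₀, rfl⟩
    ((hfP s₀ (subset_convexHull ℝ _ hs₀)).trans hfz)

lemma mem_of_forall_facet_le (hP : IsPolytope P) {y : Fin n → ℝ} (hy : y ∈ affineSpan ℝ P)
    (h : ∀ F, IsFacet P F → ∃ (g : (Fin n → ℝ) →ₗ[ℝ] ℝ) (e : ℝ),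
      (∀ x ∈ P, g x ≤ e) ∧ F = {x ∈ P | g x = e} ∧ g y ≤ e) : y ∈ P := by
  by_contra hyP
  obtain ⟨g, e, hg, hF, hgy⟩ := exists_facet_lt_of_notMem hP hy hyP
  obtain ⟨g', e', hg', heq, hg'y⟩ := h _ hF
  exact (lt_of_lt_of_facet_eq hg hg' hF heq hy hgy).not_ge hg'y

lemma eq_of_forall_facet_mem (hP : IsPolytope P) (hfin : {F | IsFacet P F}.Finite)
    {v w : Fin n → ℝ} (hv : IsVertex P v) (hw : w ∈ P)
    (h : ∀ F, IsFacet P F → v ∈ F → w ∈ F) : v = w := by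
  have hvP := hv.mem
  obtain h₀ | hPv | ⟨f, c, hf, hfv⟩ := hv
  · exact absurd h₀ (Set.singleton_ne_empty v)
  · exact ((hPv ▸ hw : w ∈ ({v} : Set _))).symm
  by_contra hvw
  have hfv' : f v = c := (hfv.subset rfl).2
  have hfw : f w < c := (hf w hw).lt_of_ne fun h => hvw (hfv.symm.subset ⟨hw, h⟩).symm
  set y : ℝ → Fin n → ℝ := fun t => v + t • (v - w)
  have hy : ∀ (g : (Fin n → ℝ) →ₗ[ℝ] ℝ) t, g (y t) = g v + t * (g v - g w) := fun g t => by
    simp [y]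
  have hyaff : ∀ t, y t ∈ affineSpan ℝ P := fun t => by
    simpa [y, add_comm] using AffineSubspace.smul_vsub_vadd_mem _ t (subset_affineSpan ℝ P hvP)
      (subset_affineSpan ℝ P hw) (subset_affineSpan ℝ P hvP)
  have hnear : ∀ F ∈ {F | IsFacet P F}, ∀ᶠ t in 𝓝 (0 : ℝ), ∃ (g : (Fin n → ℝ) →ₗ[ℝ] ℝ) (e : ℝ),
      (∀ x ∈ P, g x ≤ e) ∧ F = {x ∈ P | g x = e} ∧ g (y t) ≤ e := by
    intro F hF
    obtain ⟨g, e, hg, rfl⟩ := IsFacet.exists_eq_setOf hF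
    by_cases hvF : v ∈ {x ∈ P | g x = e}
    · refine Eventually.of_forall fun t => ⟨g, e, hg, rfl, ?_⟩
      rw [hy, hvF.2, (h _ hF hvF).2, sub_self, mul_zero, add_zero]
    · have hgv : g v < e := (hg v hvP).lt_of_ne fun h => hvF ⟨hvP, h⟩
      have hlim : Tendsto (fun t : ℝ => g (y t)) (𝓝 0) (𝓝 (g v)) := by
        simp only [hy]
        exact (by fun_prop : Continuous fun t : ℝ => g v + t * (g v - g w)).tendsto' 0 _ (by simp)
      filter_upwards [hlim.eventually_lt_const hgv] with t ht
      exact ⟨g, e, hg, rfl, ht.le⟩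
  obtain ⟨t, hyt, ht⟩ := (((eventually_all_finite hfin).2 hnear).filter_mono
    nhdsWithin_le_nhds |>.and (self_mem_nhdsWithin : ∀ᶠ t in 𝓝[>] (0 : ℝ), 0 < t)).exists
  have := hf _ (mem_of_forall_facet_le hP (hyaff t) hyt)
  rw [hy, hfv'] at this
  nlinarith

lemma facets_mem_eq_diff_of_complementary (hsimple : IsSimplePolytope P)
    (hfin : {F | IsFacet P F}.Finite) (hcard : {F | IsFacet P F}.ncard = 2 * sdim P)
    {u v : Fin n → ℝ} (hu : IsVertex P u) (hv : IsVertex P v) (huv : Complementary P u v) :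
    {F | IsFacet P F ∧ v ∈ F} = {F | IsFacet P F} \ {F | IsFacet P F ∧ u ∈ F} := by
  have hsub : {F | IsFacet P F ∧ u ∈ F} ⊆ {F | IsFacet P F} := fun F hF => hF.1
  refine Set.eq_of_subset_of_ncard_le (fun F ⟨hF, hvF⟩ => ⟨hF, fun huF => huv F hF ⟨huF.2, hvF⟩⟩)
    ?_ hfin.sdiff
  have := Set.ncard_sdiff_add_ncard_of_subset hsub hfin
  rw [hcard, hsimple u hu] at this
  rw [hsimple v hv]
  omega

end Polytope

theorem stmt3_general {n d : ℕ} (hd : 1 < d) (P : Set (Fin n → ℝ))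
    (hP : IsPolytope P) (hdim : sdim P = d) (hsimple : IsSimplePolytope P)
    (hfacets : {F | IsFacet P F}.ncard = 2 * d)
    (u v w : Fin n → ℝ) (hu : IsVertex P u) (hv : IsVertex P v)
    (hw : IsVertex P w)
    (h1 : Complementary P u v) (h2 : Complementary P u w) :
    v = w := by
  have hfin : {F | IsFacet P F}.Finite := Set.finite_of_ncard_ne_zero (by omega)
  have hcard : {F | IsFacet P F}.ncard = 2 * sdim P := hdim ▸ hfacets
  have hv' := facets_mem_eq_diff_of_complementary hsimple hfin hcard hu hv h1
  have hw' := facets_mem_eq_diff_of_complementary hsimple hfin hcard hu hw h2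
  refine eq_of_forall_facet_mem hP hfin hv hw.mem fun F hF hvF => ?_
  have hF : F ∈ {F | IsFacet P F ∧ w ∈ F} := hw' ▸ hv' ▸ ⟨hF, hvF⟩
  exact hF.2

theorem stmt3 {n d : ℕ} (hd : 1 < d) (P : Set (Fin n → ℝ))
    (hP : IsPolytope P) (hdim : sdim P = d) (hsimple : IsSimplePolytope P)
    (hfacets : {F | IsFacet P F}.ncard = 2 * d)
    (u v w : Fin n → ℝ) (hu : IsVertex P u) (hv : IsVertex P v)
    (hw : IsVertex P w) (huv : u ≠ v) (huw : u ≠ w)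
    (h1 : Complementary P u v) (h2 : Complementary P u w) :
    v = w :=
  stmt3_general hd P hP hdim hsimple hfacets u v w hu hv hw h1 h2
end

section
/- Let P be a simple polytope of dimension d > 1, let u, v be complementary vertices of P, and let x be any vertex of P adjacent to v. Then u and x have at most one facet of P in common, no single facet of P contains all three vertices u, v, x, and the set of facets of P containing the vertex u or containing the edge joining v and x consists of all facets touching u or v except the unique facet that contains v but not x; in particular it has exactly 2d − 1 elements. -/
/-!
Rotating a supporting hyperplane of `P` about a lower-dimensional affine subspace until it touches
further points turns every exposed face into a facet avoiding a prescribed point, and shows that a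
point of the affine hull outside `P` violates some facet inequality. Hence near a point `m` of a
face `G`, `P` is cut out by the facets through `m`; moving from `m` inside all their hyperplanes
keeps one in `G`, so `m` lies on at least `dim P - dim G` facets. For the midpoint of an edge `vx`
this gives `d - 1` facets through `v` and `x`; as some facet contains `v` but not `x`, in a simple
polytope exactly one does. Complementarity of `u` and `v` makes the facets through `u` disjoint
from those through `v`, and the count is `d + d - 1`.
-/

open Module Set Topology

section LinearAlgebra

variable {K E : Type*} [Field K] [AddCommGroup E] [Module K E]

theorem vectorSpan_le_of_forall_sub_mem {A : Set E} {z : E} {U : Submodule K E}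
    (h : ∀ a ∈ A, a - z ∈ U) : vectorSpan K A ≤ U := by
  rw [vectorSpan_def, Submodule.span_le]
  rintro _ ⟨a, ha, b, hb, rfl⟩
  simpa [vsub_eq_sub] using U.sub_mem (h a ha) (h b hb)

theorem vectorSpan_le_ker_of_forall_eq {A : Set E} {f : E →ₗ[K] K} {c : K}
    (h : ∀ a ∈ A, f a = c) : vectorSpan K A ≤ LinearMap.ker f := by
  rw [vectorSpan_def, Submodule.span_le]
  rintro _ ⟨a, ha, b, hb, rfl⟩
  simp [h a ha, h b hb]

variable [FiniteDimensional K E]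

theorem finrank_le_finrank_inf_iInf_ker_add_card {ι : Type*} [Finite ι] (W : Submodule K E)
    (φ : ι → E →ₗ[K] K) :
    finrank K W ≤ finrank K ↥(W ⊓ ⨅ i, LinearMap.ker (φ i)) + Nat.card ι := by
  have := Fintype.ofFinite ι
  have hsup := Submodule.finrank_sup_add_finrank_inf_eq W (⨅ i, LinearMap.ker (φ i))
  have hle := Submodule.finrank_le (W ⊔ ⨅ i, LinearMap.ker (φ i))
  have hrank := LinearMap.finrank_range_add_finrank_ker (LinearMap.pi φ)
  have hrange := Submodule.finrank_le (LinearMap.range (LinearMap.pi φ))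
  rw [LinearMap.ker_pi] at hrank
  rw [Module.finrank_fintype_fun_eq_card, ← Nat.card_eq_fintype_card] at hrange
  omega

theorem mul_apply_eq_of_le_ker {W V : Submodule K E} (hWV : W ≤ V)
    (hcodim : finrank K W + 1 = finrank K V) {f g : E →ₗ[K] K}
    (hf : W ≤ LinearMap.ker f) (hg : W ≤ LinearMap.ker g) {a b : E} (ha : a ∈ V) (hb : b ∈ V) :
    f a * g b = g a * f b := by
  have hW : W ≤ V ⊓ LinearMap.ker f := le_inf hWV hf
  have hMV := Submodule.finrank_mono (inf_le_left : V ⊓ LinearMap.ker f ≤ V)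
  have hWM := Submodule.finrank_mono hW
  rcases (by omega : finrank K V ≤ finrank K ↥(V ⊓ LinearMap.ker f) ∨
      finrank K ↥(V ⊓ LinearMap.ker f) ≤ finrank K W) with h | h
  · have hVf : V ≤ LinearMap.ker f := inf_eq_left.1 (Submodule.eq_of_le_of_finrank_le inf_le_left h)
    simp [LinearMap.mem_ker.1 (hVf ha), LinearMap.mem_ker.1 (hVf hb)]
  · have hWeq : W = V ⊓ LinearMap.ker f := Submodule.eq_of_le_of_finrank_le hW h
    have hr : f b • a - f a • b ∈ V ⊓ LinearMap.ker f :=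
      ⟨V.sub_mem (V.smul_mem _ ha) (V.smul_mem _ hb), by simp [mul_comm]⟩
    have := LinearMap.mem_ker.1 (hg (hWeq ▸ hr))
    simp only [map_sub, map_smul, smul_eq_mul] at this
    linear_combination -this

end LinearAlgebra

section TightSet

variable {E : Type*} [AddCommGroup E] [Module ℝ E]

noncomputable def tightSet (S : Finset E) (ℓ : E →ₗ[ℝ] ℝ) (c : ℝ) : Finset E :=
  {s ∈ S | ℓ s = c}

@[simp]
theorem mem_tightSet {S : Finset E} {ℓ : E →ₗ[ℝ] ℝ} {c : ℝ} {s : E} :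
    s ∈ tightSet S ℓ c ↔ s ∈ S ∧ ℓ s = c :=
  Finset.mem_filter

theorem tightSet_subset (S : Finset E) (ℓ : E →ₗ[ℝ] ℝ) (c : ℝ) : tightSet S ℓ c ⊆ S :=
  Finset.filter_subset _ _

theorem forall_mem_convexHull_le {A : Set E} {ℓ : E →ₗ[ℝ] ℝ} {c : ℝ} (h : ∀ a ∈ A, ℓ a ≤ c) :
    ∀ p ∈ convexHull ℝ A, ℓ p ≤ c :=
  fun _ hp => convexHull_min h (convex_halfSpace_le ℓ.isLinear c) hp

theorem vectorSpan_convexHull (A : Set E) : vectorSpan ℝ (convexHull ℝ A) = vectorSpan ℝ A := by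
  rw [← direction_affineSpan, affineSpan_convexHull, direction_affineSpan]

/-- A convex combination attains the maximum `c` of `ℓ` only if all its weight sits on points
where `ℓ = c`. -/
theorem inter_hyperplane_convexHull_eq {S : Finset E} {ℓ : E →ₗ[ℝ] ℝ} {c : ℝ}
    (hS : ∀ s ∈ S, ℓ s ≤ c) :
    {p ∈ convexHull ℝ (S : Set E) | ℓ p = c} = convexHull ℝ (tightSet S ℓ c : Set E) := by
  refine Subset.antisymm ?_ fun p hp => ⟨convexHull_mono ?_ hp, ?_⟩
  · rintro _ ⟨hp, hpc⟩
    obtain ⟨w, hw0, hw1, rfl⟩ := Finset.mem_convexHull'.1 hp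
    have hslack : ∑ s ∈ S, w s * (c - ℓ s) = 0 := by
      simp only [map_sum, map_smul, smul_eq_mul] at hpc
      simp only [mul_sub, Finset.sum_sub_distrib, ← Finset.sum_mul, hw1, hpc, one_mul, sub_self]
    have hw : ∀ s ∈ S, w s ≠ 0 → ℓ s = c := fun s hs hws => by
      have := (Finset.sum_eq_zero_iff_of_nonneg fun s hs =>
        mul_nonneg (hw0 s hs) (sub_nonneg.2 (hS s hs))).1 hslack s hs
      linarith [(mul_eq_zero.1 this).resolve_left hws]
    refine Finset.mem_convexHull'.2 ⟨w, fun s hs => hw0 s (tightSet_subset S ℓ c hs), ?_, ?_⟩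
    · rw [tightSet, Finset.sum_filter_of_ne hw, hw1]
    · exact Finset.sum_filter_of_ne fun s hs hws => hw s hs fun h => hws (by simp [h])
  · exact_mod_cast tightSet_subset S ℓ c
  · exact convexHull_min (fun s hs => (mem_tightSet.1 hs).2)
      (convex_hyperplane ℓ.isLinear c) hp

end TightSet

section Rotation

variable {E : Type*} [AddCommGroup E] [Module ℝ E] [FiniteDimensional ℝ E]

theorem exists_forall_eq_lt_of_finrank_vectorSpan_lt {A S : Set E} {z : E}
    (h : finrank ℝ (vectorSpan ℝ (insert z A)) < finrank ℝ (vectorSpan ℝ S)) :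
    ∃ g : E →ₗ[ℝ] ℝ, (∀ a ∈ A, g a = g z) ∧ ∃ s ∈ S, g z < g s := by
  set U := vectorSpan ℝ (insert z A)
  obtain ⟨s, hsS, hsU⟩ : ∃ s ∈ S, s - z ∉ U := by
    by_contra! hS
    have := Submodule.finrank_mono (vectorSpan_le_of_forall_sub_mem hS)
    omega
  obtain ⟨φ, hφs, hφU⟩ := Submodule.exists_dual_map_eq_bot_of_notMem hsU inferInstance
  have hφ : ∀ a ∈ A, φ a = φ z := fun a ha => by
    have := LinearMap.le_ker_iff_map.2 hφU
      (by simpa using vsub_mem_vectorSpan ℝ (mem_insert_of_mem z ha) (mem_insert z A))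
    rwa [LinearMap.mem_ker, map_sub, sub_eq_zero] at this
  rw [map_sub, sub_ne_zero] at hφs
  rcases hφs.lt_or_gt with hlt | hlt
  · exact ⟨-φ, fun a ha => by simp [hφ a ha], s, hsS, by simpa using hlt⟩
  · exact ⟨φ, hφ, s, hsS, hlt⟩

/-- Rotate the hyperplane `ℓ = c` about the affine span of its contact set and `z`. -/
theorem exists_tightSet_ssubset {S : Finset E} {ℓ : E →ₗ[ℝ] ℝ} {c : ℝ} (hS : ∀ s ∈ S, ℓ s ≤ c)
    (z : E) (hrank : finrank ℝ (vectorSpan ℝ (tightSet S ℓ c : Set E)) + 2 ≤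
      finrank ℝ (vectorSpan ℝ (S : Set E))) :
    ∃ (ℓ' : E →ₗ[ℝ] ℝ) (c' : ℝ), (∀ s ∈ S, ℓ' s ≤ c') ∧
      tightSet S ℓ c ⊂ tightSet S ℓ' c' ∧ ℓ' z - c' = ℓ z - c := by
  obtain ⟨g, hgT, s₀, hs₀, hgs₀⟩ := exists_forall_eq_lt_of_finrank_vectorSpan_lt (S := (S : Set E))
    ((finrank_vectorSpan_insert_le_set ℝ (tightSet S ℓ c : Set E) z).trans_lt (by omega))
  have hslack : ∀ s ∈ S, g z < g s → ℓ s < c := fun s hs hgs =>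
    (hS s hs).lt_of_ne fun hc => hgs.ne' (hgT s (mem_tightSet.2 ⟨hs, hc⟩))
  -- the first point of `S` hit when turning the hyperplane `ℓ = c` in the direction of `g`
  obtain ⟨s₁, hs₁, hmin⟩ := Finset.exists_min_image {s ∈ S | g z < g s}
    (fun s => (c - ℓ s) / (g s - g z)) ⟨s₀, Finset.mem_filter.2 ⟨hs₀, hgs₀⟩⟩
  rw [Finset.mem_filter] at hs₁
  set t := (c - ℓ s₁) / (g s₁ - g z)
  have hgap : 0 < g s₁ - g z := sub_pos.2 hs₁.2
  have ht : 0 < t := div_pos (sub_pos.2 (hslack s₁ hs₁.1 hs₁.2)) hgap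
  refine ⟨ℓ + t • g, c + t * g z, fun s hs => ?_, ?_, by simp⟩
  · simp only [LinearMap.add_apply, LinearMap.smul_apply, smul_eq_mul]
    rcases le_or_gt (g s) (g z) with hgs | hgs
    · nlinarith [hS s hs]
    · have := (le_div_iff₀ (sub_pos.2 hgs)).1 (hmin s (Finset.mem_filter.2 ⟨hs, hgs⟩))
      linarith
  · refine Finset.ssubset_iff_of_subset (fun s hs => ?_) |>.2 ⟨s₁, ?_, fun h => ?_⟩
    · obtain ⟨hsS, hsc⟩ := mem_tightSet.1 hs
      simp [hsS, hsc, hgT s hs]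
    · refine mem_tightSet.2 ⟨hs₁.1, ?_⟩
      simp only [LinearMap.add_apply, LinearMap.smul_apply, smul_eq_mul, t]
      field_simp
      ring
    · exact hs₁.2.ne' (hgT s₁ h)

theorem exists_supporting_finrank_tightSet (S : Finset E) (z : E) {ℓ : E →ₗ[ℝ] ℝ} {c : ℝ}
    (hS : ∀ s ∈ S, ℓ s ≤ c) :
    ∃ (ℓ' : E →ₗ[ℝ] ℝ) (c' : ℝ), (∀ s ∈ S, ℓ' s ≤ c') ∧ tightSet S ℓ c ⊆ tightSet S ℓ' c' ∧
      ℓ' z - c' = ℓ z - c ∧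
      finrank ℝ (vectorSpan ℝ (S : Set E)) ≤
        finrank ℝ (vectorSpan ℝ (tightSet S ℓ' c' : Set E)) + 1 := by
  induction hk : S.card - (tightSet S ℓ c).card using Nat.strong_induction_on
    generalizing ℓ c with
  | _ k ih =>
  by_cases hstop : finrank ℝ (vectorSpan ℝ (S : Set E)) ≤
      finrank ℝ (vectorSpan ℝ (tightSet S ℓ c : Set E)) + 1
  · exact ⟨ℓ, c, hS, subset_rfl, rfl, hstop⟩
  obtain ⟨ℓ₁, c₁, hS₁, hss, hz₁⟩ := exists_tightSet_ssubset hS z (by omega)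
  have hlt := Finset.card_lt_card hss
  have hle := Finset.card_le_card (tightSet_subset S ℓ₁ c₁)
  obtain ⟨ℓ', c', hS', hss', hz', hrank⟩ := ih _ (by omega) hS₁ rfl
  exact ⟨ℓ', c', hS', hss.subset.trans hss', hz'.trans hz₁, hrank⟩

end Rotation

section Polytope

variable {n : ℕ} {S : Finset (Fin n → ℝ)} {P F : Set (Fin n → ℝ)}

theorem IsFace.subset (hF : IsFace P F) : F ⊆ P := by
  rcases hF with rfl | rfl | ⟨f, c, -, rfl⟩
  exacts [empty_subset P, subset_rfl, sep_subset P _]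

theorem IsFace.convex (hP : Convex ℝ P) (hF : IsFace P F) : Convex ℝ F := by
  rcases hF with rfl | rfl | ⟨f, c, -, rfl⟩
  exacts [convex_empty, hP, hP.inter (convex_hyperplane f.isLinear c)]

theorem IsFace.exists_eq (hF : IsFace P F) (hne : F.Nonempty) (hlt : sdim F < sdim P) :
    ∃ (f : (Fin n → ℝ) →ₗ[ℝ] ℝ) (c : ℝ), (∀ p ∈ P, f p ≤ c) ∧ F = {p ∈ P | f p = c} := by
  rcases hF with rfl | rfl | h
  exacts [absurd hne not_nonempty_empty, absurd hlt (lt_irrefl _), h]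

theorem IsFacet.exists_eq (hF : IsFacet P F) :
    ∃ (f : (Fin n → ℝ) →ₗ[ℝ] ℝ) (c : ℝ), (∀ p ∈ P, f p ≤ c) ∧ F = {p ∈ P | f p = c} :=
  hF.1.exists_eq hF.2.1 (by have := hF.2.2; omega)

theorem IsVertex.exists_eq {v : Fin n → ℝ} (hv : IsVertex P v) (hP : 1 ≤ sdim P) :
    ∃ (f : (Fin n → ℝ) →ₗ[ℝ] ℝ) (c : ℝ), (∀ p ∈ P, f p ≤ c) ∧ {v} = {p ∈ P | f p = c} :=
  IsFace.exists_eq hv (singleton_nonempty v)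
    (by rw [sdim, vectorSpan_singleton, finrank_bot]; omega)

theorem Adjacent.symm {u v : Fin n → ℝ} (h : Adjacent P u v) : Adjacent P v u :=
  let ⟨huv, E, hE, huE, hvE⟩ := h
  ⟨huv.symm, E, hE, hvE, huE⟩

theorem midpoint_mem_iff {f : (Fin n → ℝ) →ₗ[ℝ] ℝ} {c : ℝ} (hf : ∀ p ∈ P, f p ≤ c)
    {v x : Fin n → ℝ} (hv : v ∈ P) (hx : x ∈ P) (hm : midpoint ℝ v x ∈ P) :
    midpoint ℝ v x ∈ {p ∈ P | f p = c} ↔ v ∈ {p ∈ P | f p = c} ∧ x ∈ {p ∈ P | f p = c} := by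
  have hfm : f (midpoint ℝ v x) = (f v + f x) / 2 := by
    simp only [midpoint_eq_smul_add, invOf_eq_inv, smul_add, map_add, map_smul, smul_eq_mul]
    ring
  have := hf v hv
  have := hf x hx
  simp only [mem_ofPred_eq, hfm, hv, hx, hm, true_and]
  constructor
  · intro h; constructor <;> linarith
  · rintro ⟨h₁, h₂⟩; rw [h₁, h₂]; ring

theorem finite_setOf_isFacet (hP : P = convexHull ℝ (S : Set (Fin n → ℝ))) :
    {F | IsFacet P F}.Finite := by
  refine ((S.powerset.finite_toSet).image
    fun T : Finset (Fin n → ℝ) => convexHull ℝ (T : Set (Fin n → ℝ))).subset ?_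
  intro F hF
  obtain ⟨f, c, hf, rfl⟩ := hF.exists_eq
  refine ⟨tightSet S f c, Finset.mem_powerset.2 (tightSet_subset S f c), ?_⟩
  rw [hP, inter_hyperplane_convexHull_eq fun s hs => hf s (hP ▸ subset_convexHull ℝ _ hs)]

theorem isFacet_of_tightSet (hP : P = convexHull ℝ (S : Set (Fin n → ℝ)))
    {ℓ : (Fin n → ℝ) →ₗ[ℝ] ℝ} {c : ℝ} (hS : ∀ s ∈ S, ℓ s ≤ c) (hne : (tightSet S ℓ c).Nonempty)
    (hrank : finrank ℝ (vectorSpan ℝ (S : Set (Fin n → ℝ))) ≤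
      finrank ℝ (vectorSpan ℝ (tightSet S ℓ c : Set (Fin n → ℝ))) + 1)
    {z : Fin n → ℝ} (hz : z ∈ affineSpan ℝ P) (hzc : ℓ z ≠ c) :
    IsFacet P {p ∈ P | ℓ p = c} := by
  have hF := inter_hyperplane_convexHull_eq hS
  rw [← hP] at hF
  obtain ⟨p₀, hp₀⟩ := hne
  obtain ⟨hp₀S, hp₀c⟩ := mem_tightSet.1 hp₀
  set V := vectorSpan ℝ (S : Set (Fin n → ℝ)) with hV
  have hTV : vectorSpan ℝ (tightSet S ℓ c : Set (Fin n → ℝ)) ≤ V ⊓ LinearMap.ker ℓ :=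
    le_inf (vectorSpan_mono ℝ (by exact_mod_cast tightSet_subset S ℓ c))
      (vectorSpan_le_ker_of_forall_eq fun s hs => (mem_tightSet.1 hs).2)
  have hlt : V ⊓ LinearMap.ker ℓ < V := by
    refine inf_le_left.lt_of_ne fun h => hzc ?_
    rw [hP, affineSpan_convexHull] at hz
    have hzV := AffineSubspace.vsub_mem_direction hz (subset_affineSpan ℝ _ hp₀S)
    rw [direction_affineSpan] at hzV
    have := LinearMap.mem_ker.1 (inf_eq_left.1 h hzV)
    rwa [vsub_eq_sub, map_sub, hp₀c, sub_eq_zero] at this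
  have hdim := (Submodule.finrank_mono hTV).trans_lt (Submodule.finrank_lt_finrank_of_lt hlt)
  refine ⟨Or.inr (Or.inr ⟨ℓ, c, hP ▸ forall_mem_convexHull_le hS, rfl⟩),
    ⟨p₀, hP ▸ subset_convexHull ℝ _ hp₀S, hp₀c⟩, ?_⟩
  rw [sdim, sdim, hF, hP, vectorSpan_convexHull, vectorSpan_convexHull, ← hV]
  omega

theorem exists_isFacet_of_supporting (hP : P = convexHull ℝ (S : Set (Fin n → ℝ)))
    {g : (Fin n → ℝ) →ₗ[ℝ] ℝ} {b : ℝ} (hg : ∀ p ∈ P, g p ≤ b) (hne : ∃ p ∈ P, g p = b)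
    {z : Fin n → ℝ} (hz : z ∈ affineSpan ℝ P) (hzb : g z ≠ b) :
    ∃ (f : (Fin n → ℝ) →ₗ[ℝ] ℝ) (c : ℝ), (∀ p ∈ P, f p ≤ c) ∧ IsFacet P {p ∈ P | f p = c} ∧
      {p ∈ P | g p = b} ⊆ {p ∈ P | f p = c} ∧ f z - c = g z - b := by
  have hS : ∀ s ∈ S, g s ≤ b := fun s hs => hg s (hP ▸ subset_convexHull ℝ _ hs)
  obtain ⟨f, c, hf, hsub, hzc, hrank⟩ := exists_supporting_finrank_tightSet S z hS
  have hface : ∀ {ℓ c}, (∀ s ∈ S, ℓ s ≤ c) →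
      {p ∈ P | ℓ p = c} = convexHull ℝ (tightSet S ℓ c : Set (Fin n → ℝ)) := fun h => by
    rw [hP]; exact inter_hyperplane_convexHull_eq h
  have hne' : (tightSet S g b).Nonempty := by
    obtain ⟨p, hp⟩ := hne
    rw [← Finset.coe_nonempty, ← convexHull_nonempty_iff (𝕜 := ℝ), ← hface hS]
    exact ⟨p, hp⟩
  refine ⟨f, c, hP ▸ forall_mem_convexHull_le hf,
    isFacet_of_tightSet hP hf (hne'.mono hsub) hrank hz fun h => hzb ?_, ?_, hzc⟩
  · linarith
  · rw [hface hS, hface hf]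
    exact convexHull_mono (by exact_mod_cast hsub)

theorem exists_isFacet_mem_notMem (hP : P = convexHull ℝ (S : Set (Fin n → ℝ)))
    (hd : 1 ≤ sdim P) {v x : Fin n → ℝ} (hv : IsVertex P v) (hx : x ∈ P) (hvx : v ≠ x) :
    ∃ F, IsFacet P F ∧ v ∈ F ∧ x ∉ F := by
  obtain ⟨g, b, hg, hgv⟩ := hv.exists_eq hd
  have hvb : v ∈ {p ∈ P | g p = b} := hgv ▸ rfl
  have hxb : g x ≠ b := fun h =>
    hvx (show x ∈ ({v} : Set (Fin n → ℝ)) from hgv ▸ ⟨hx, h⟩).symm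
  obtain ⟨f, c, -, hF, hsub, hxc⟩ :=
    exists_isFacet_of_supporting hP hg ⟨v, hvb⟩ (subset_affineSpan ℝ P hx) hxb
  exact ⟨_, hF, hsub hvb, fun h => hxb (by linarith [h.2])⟩

/-- Both affine functions vanish on the affine hull of `F`, a hyperplane in that of `P`, so they
are positively proportional there. -/
theorem IsFacet.lt_of_lt (hF : IsFacet P F) {f f' : (Fin n → ℝ) →ₗ[ℝ] ℝ} {c c' : ℝ}
    (hf : ∀ p ∈ P, f p ≤ c) (hFf : F = {p ∈ P | f p = c})
    (hf' : ∀ p ∈ P, f' p ≤ c') (hFf' : F = {p ∈ P | f' p = c'})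
    {y : Fin n → ℝ} (hy : y ∈ affineSpan ℝ P) (hfy : c < f y) : c' < f' y := by
  obtain ⟨hface, ⟨p₀, hp₀⟩, hcodim⟩ := hF
  obtain ⟨p₁, hp₁P, hp₁F⟩ : ∃ p₁ ∈ P, p₁ ∉ F := not_subset.1 fun h => by
    rw [hface.subset.antisymm h] at hcodim; omega
  have hlt : f p₁ < c := (hf p₁ hp₁P).lt_of_ne fun h => hp₁F (hFf ▸ ⟨hp₁P, h⟩)
  have hlt' : f' p₁ < c' := (hf' p₁ hp₁P).lt_of_ne fun h => hp₁F (hFf' ▸ ⟨hp₁P, h⟩)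
  have hmem : ∀ q ∈ affineSpan ℝ P, q - p₀ ∈ vectorSpan ℝ P := fun q hq => by
    simpa [direction_affineSpan] using
      AffineSubspace.vsub_mem_direction hq (subset_affineSpan ℝ P (hface.subset hp₀))
  have key := mul_apply_eq_of_le_ker (vectorSpan_mono ℝ hface.subset) hcodim
    (vectorSpan_le_ker_of_forall_eq fun p hp => (hFf ▸ hp : p ∈ {p ∈ P | f p = c}).2)
    (vectorSpan_le_ker_of_forall_eq fun p hp => (hFf' ▸ hp : p ∈ {p ∈ P | f' p = c'}).2)
    (hmem y hy) (hmem p₁ (subset_affineSpan ℝ P hp₁P))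
  simp only [map_sub, (hFf ▸ hp₀ : p₀ ∈ {p ∈ P | f p = c}).2,
    (hFf' ▸ hp₀ : p₀ ∈ {p ∈ P | f' p = c'}).2] at key
  nlinarith

theorem exists_isFacet_forall_lt_of_notMem (hP : P = convexHull ℝ (S : Set (Fin n → ℝ)))
    {y : Fin n → ℝ} (hy : y ∈ affineSpan ℝ P) (hyP : y ∉ P) :
    ∃ F, IsFacet P F ∧ ∀ (f : (Fin n → ℝ) →ₗ[ℝ] ℝ) (c : ℝ),
      (∀ p ∈ P, f p ≤ c) → F = {p ∈ P | f p = c} → c < f y := by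
  obtain ⟨g, r, hgP, hgy⟩ := geometric_hahn_banach_closed_point (hP ▸ convex_convexHull ℝ _)
    (hP ▸ S.finite_toSet.isClosed_convexHull ℝ) hyP
  obtain ⟨s₀, hs₀, hmax⟩ := S.exists_max_image (fun s => g s) <| Finset.nonempty_iff_ne_empty.2
    fun h => AffineSubspace.notMem_bot ℝ _ y (by simpa [hP, h] using hy)
  have hs₀P : s₀ ∈ P := hP ▸ subset_convexHull ℝ _ hs₀
  have hgs₀ := hgP s₀ hs₀P
  obtain ⟨f, c, hf, hF, -, hyc⟩ := exists_isFacet_of_supporting hP (g := g.toLinearMap)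
    (hP ▸ forall_mem_convexHull_le hmax) ⟨s₀, hs₀P, rfl⟩ hy (hgs₀.trans hgy).ne'
  refine ⟨_, hF, fun f' c' hf' hFf' => hF.lt_of_lt hf rfl hf' hFf' hy ?_⟩
  simp only [ContinuousLinearMap.coe_coe] at hyc
  linarith

/-- Near a point `m` of `P`, only the facets through `m` can block the motion in direction `u`. -/
theorem exists_pos_add_smul_mem (hP : P = convexHull ℝ (S : Set (Fin n → ℝ)))
    {m u : Fin n → ℝ} (hm : m ∈ P) (hu : u ∈ vectorSpan ℝ P)
    (hker : ∀ F, IsFacet P F → m ∈ F → ∃ (f : (Fin n → ℝ) →ₗ[ℝ] ℝ) (c : ℝ),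
      (∀ p ∈ P, f p ≤ c) ∧ F = {p ∈ P | f p = c} ∧ f u = 0) :
    ∃ t : ℝ, 0 < t ∧ m + t • u ∈ P := by
  have hfar : ∀ F ∈ {F | IsFacet P F ∧ m ∉ F}, ∀ᶠ t in 𝓝 (0 : ℝ),
      ∃ (f : (Fin n → ℝ) →ₗ[ℝ] ℝ) (c : ℝ),
        (∀ p ∈ P, f p ≤ c) ∧ F = {p ∈ P | f p = c} ∧ f (m + t • u) < c := by
    rintro F ⟨hF, hmF⟩
    obtain ⟨f, c, hf, rfl⟩ := hF.exists_eq
    have hlt : f m < c := (hf m hm).lt_of_ne fun h => hmF ⟨hm, h⟩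
    have hcont : Continuous fun t : ℝ => f m + t * f u := by fun_prop
    filter_upwards [hcont.continuousAt.eventually_lt continuousAt_const (by simpa using hlt)]
      with t ht using ⟨f, c, hf, rfl, by simpa using ht⟩
  have hfin : {F | IsFacet P F ∧ m ∉ F}.Finite :=
    (finite_setOf_isFacet hP).subset fun F hF => hF.1
  obtain ⟨t, ht, htpos⟩ := ((hfin.eventually_all.2 hfar).filter_mono nhdsWithin_le_nhds |>.and
    (self_mem_nhdsWithin : Ioi (0 : ℝ) ∈ 𝓝[>] 0)).exists
  refine ⟨t, htpos, by_contra fun hy => ?_⟩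
  have hy' : m + t • u ∈ affineSpan ℝ P := by
    rw [add_comm]
    exact AffineSubspace.vadd_mem_of_mem_direction
      (by rw [direction_affineSpan]; exact Submodule.smul_mem _ t hu) (subset_affineSpan ℝ P hm)
  obtain ⟨F, hF, hviol⟩ := exists_isFacet_forall_lt_of_notMem hP hy' hy
  by_cases hmF : m ∈ F
  · obtain ⟨f, c, hf, hFf, hfu⟩ := hker F hF hmF
    have hfm : f m = c := (hFf ▸ hmF : m ∈ {p ∈ P | f p = c}).2
    simpa [hfu, hfm] using hviol f c hf hFf
  · obtain ⟨f, c, hf, hFf, hlt⟩ := ht F ⟨hF, hmF⟩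
    exact lt_asymm hlt (hviol f c hf hFf)

/-- Moving from `m` inside the hyperplanes of all facets through `m` stays in `P` in both
directions, hence in `G`. -/
theorem sdim_le_ncard_add_sdim (hP : P = convexHull ℝ (S : Set (Fin n → ℝ)))
    {G : Set (Fin n → ℝ)} (hG : IsFace P G) {m : Fin n → ℝ} (hm : m ∈ G) :
    sdim P ≤ {F | IsFacet P F ∧ m ∈ F}.ncard + sdim G := by
  set A := {F | IsFacet P F ∧ m ∈ F}
  have : Finite A := ((finite_setOf_isFacet hP).subset fun F hF => hF.1).to_subtype
  choose f c hf hFf using fun F : A => F.2.1.exists_eq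
  set U := vectorSpan ℝ P ⊓ ⨅ F : A, LinearMap.ker (f F) with hU
  suffices hUG : U ≤ vectorSpan ℝ G by
    have hP_U := finrank_le_finrank_inf_iInf_ker_add_card (vectorSpan ℝ P) f
    have hU_G := Submodule.finrank_mono hUG
    rw [← hU, Nat.card_coe_set_eq] at hP_U
    unfold sdim
    omega
  have hker : ∀ u ∈ U, ∀ F, IsFacet P F → m ∈ F → ∃ (f : (Fin n → ℝ) →ₗ[ℝ] ℝ) (c : ℝ),
      (∀ p ∈ P, f p ≤ c) ∧ F = {p ∈ P | f p = c} ∧ f u = 0 := fun u hu F hF hmF =>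
    ⟨f ⟨F, hF, hmF⟩, c _, hf _, hFf ⟨F, hF, hmF⟩, (Submodule.mem_iInf _).1 hu.2 _⟩
  intro u hu
  have hmP := hG.subset hm
  obtain ⟨t₁, ht₁, h₁⟩ := exists_pos_add_smul_mem hP hmP hu.1 (hker u hu)
  obtain ⟨t₂, ht₂, h₂⟩ := exists_pos_add_smul_mem hP hmP (neg_mem hu.1) (hker (-u) (neg_mem hu))
  rcases hG with rfl | rfl | ⟨g, b, hg, rfl⟩
  · exact absurd hm (notMem_empty m)
  · exact hu.1
  · have hgm : g m = b := hm.2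
    have hg₁ := hg _ h₁
    have hg₂ := hg _ h₂
    simp only [map_add, map_smul, map_neg, smul_eq_mul, hgm] at hg₁ hg₂
    have hgu : g u = 0 := by nlinarith
    have hG₁ : m + t₁ • u ∈ {p ∈ P | g p = b} := ⟨h₁, by simp [hgu, hgm]⟩
    have := vsub_mem_vectorSpan ℝ hG₁ hm
    rw [vsub_eq_sub, add_sub_cancel_left] at this
    exact (Submodule.smul_mem_iff _ ht₁.ne').1 this

theorem sdim_le_ncard_isFacet_mem_mem_add_one (hP : P = convexHull ℝ (S : Set (Fin n → ℝ)))
    {E : Set (Fin n → ℝ)} (hE : IsEdge P E) {v x : Fin n → ℝ} (hv : v ∈ E) (hx : x ∈ E) :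
    sdim P ≤ {F | IsFacet P F ∧ v ∈ F ∧ x ∈ F}.ncard + 1 := by
  have hm : midpoint ℝ v x ∈ E :=
    (hE.1.convex (hP ▸ convex_convexHull ℝ _)).segment_subset hv hx (midpoint_mem_segment v x)
  have hfacets : {F | IsFacet P F ∧ midpoint ℝ v x ∈ F} = {F | IsFacet P F ∧ v ∈ F ∧ x ∈ F} := by
    ext F
    refine and_congr_right fun hF => ?_
    obtain ⟨f, c, hf, rfl⟩ := hF.exists_eq
    exact midpoint_mem_iff hf (hE.1.subset hv) (hE.1.subset hx) (hE.1.subset hm)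
  simpa [hfacets, hE.2] using sdim_le_ncard_add_sdim hP hE.1 hm

/-- In a simple polytope an edge `vx` lies on `d - 1` of the `d` facets through `v`, so exactly
one facet contains `v` but not `x`. -/
theorem IsSimplePolytope.existsUnique_isFacet_mem_notMem (hsimple : IsSimplePolytope P)
    (hP : IsPolytope P) (hd : 2 ≤ sdim P) {v x : Fin n → ℝ} (hv : IsVertex P v)
    (hvx : Adjacent P v x) : ∃! F, IsFacet P F ∧ v ∈ F ∧ x ∉ F := by
  obtain ⟨S, hPS⟩ := hP
  obtain ⟨hne, E, hE, hvE, hxE⟩ := hvx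
  obtain ⟨F₁, hF₁, hvF₁, hxF₁⟩ :=
    exists_isFacet_mem_notMem hPS (by omega) hv (hE.1.subset hxE) hne
  refine ⟨F₁, ⟨hF₁, hvF₁, hxF₁⟩, fun F₂ ⟨hF₂, hvF₂, hxF₂⟩ => by_contra fun h₂₁ => ?_⟩
  have hsub : {F | IsFacet P F ∧ v ∈ F ∧ x ∈ F} ⊆ {F | IsFacet P F ∧ v ∈ F} \ {F₂, F₁} := by
    rintro F ⟨hF, hvF, hxF⟩
    refine ⟨⟨hF, hvF⟩, ?_⟩
    rintro (rfl | rfl) <;> contradiction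
  have hcard := Set.ncard_le_ncard hsub
    ((finite_setOf_isFacet hPS).subset fun F hF => hF.1).sdiff
  have hpair : ({F₂, F₁} : Set (Set (Fin n → ℝ))) ⊆ {F | IsFacet P F ∧ v ∈ F} :=
    pair_subset ⟨hF₂, hvF₂⟩ ⟨hF₁, hvF₁⟩
  rw [Set.ncard_sdiff hpair, Set.ncard_pair h₂₁, hsimple v hv] at hcard
  have := sdim_le_ncard_isFacet_mem_mem_add_one hPS hE hvE hxE
  omega

theorem setOf_isFacet_mem_or_segment_subset_eq (hP : Convex ℝ P) {u v x : Fin n → ℝ}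
    (hcomp : Complementary P u v) {F₀ : Set (Fin n → ℝ)} (hF₀ : IsFacet P F₀ ∧ v ∈ F₀ ∧ x ∉ F₀)
    (hunique : ∀ F, IsFacet P F ∧ v ∈ F ∧ x ∉ F → F = F₀) :
    {F | IsFacet P F ∧ (u ∈ F ∨ segment ℝ v x ⊆ F)} =
      {F | IsFacet P F ∧ (u ∈ F ∨ v ∈ F)} \ {F₀} := by
  ext F
  have hseg : IsFacet P F → (segment ℝ v x ⊆ F ↔ v ∈ F ∧ x ∈ F) := fun hF =>
    ⟨fun h => ⟨h (left_mem_segment ℝ v x), h (right_mem_segment ℝ v x)⟩,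
      fun h => (hF.1.convex hP).segment_subset h.1 h.2⟩
  simp only [Set.mem_sdiff, mem_ofPred_eq, mem_singleton_iff]
  constructor
  · rintro ⟨hF, huF | hvxF⟩
    · exact ⟨⟨hF, .inl huF⟩, by rintro rfl; exact hcomp F hF ⟨huF, hF₀.2.1⟩⟩
    · obtain ⟨hvF, hxF⟩ := (hseg hF).1 hvxF
      exact ⟨⟨hF, .inr hvF⟩, by rintro rfl; exact hF₀.2.2 hxF⟩
  · rintro ⟨⟨hF, huF | hvF⟩, hFF₀⟩
    · exact ⟨hF, .inl huF⟩
    · exact ⟨hF, .inr ((hseg hF).2 ⟨hvF, by_contra fun hxF => hFF₀ (hunique F ⟨hF, hvF, hxF⟩)⟩)⟩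

theorem Complementary.ncard_setOf_isFacet_mem_or_mem {u v : Fin n → ℝ}
    (hcomp : Complementary P u v) (hfin : {F | IsFacet P F}.Finite) :
    {F | IsFacet P F ∧ (u ∈ F ∨ v ∈ F)}.ncard =
      {F | IsFacet P F ∧ u ∈ F}.ncard + {F | IsFacet P F ∧ v ∈ F}.ncard := by
  have hunion : {F | IsFacet P F ∧ (u ∈ F ∨ v ∈ F)} =
      {F | IsFacet P F ∧ u ∈ F} ∪ {F | IsFacet P F ∧ v ∈ F} := by
    ext F
    simp only [mem_union, mem_ofPred_eq, and_or_left]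
  rw [hunion, Set.ncard_union_eq (Set.disjoint_left.2 fun F hFu hFv => hcomp F hFu.1 ⟨hFu.2, hFv.2⟩)
    (hfin.subset fun F hF => hF.1) (hfin.subset fun F hF => hF.1)]

end Polytope

theorem stmt7_general {n d : ℕ} (hd : 1 < d) (P : Set (Fin n → ℝ))
    (hP : IsPolytope P) (hdim : sdim P = d) (hsimple : IsSimplePolytope P)
    (u v : Fin n → ℝ) (hu : IsVertex P u) (hv : IsVertex P v)
    (hcomp : Complementary P u v)
    (x : Fin n → ℝ) (hx : IsVertex P x) (hadj : Adjacent P v x) :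
    {F | IsFacet P F ∧ u ∈ F ∧ x ∈ F}.ncard ≤ 1 ∧
    (¬ ∃ F, IsFacet P F ∧ u ∈ F ∧ v ∈ F ∧ x ∈ F) ∧
    (∃! F₀, IsFacet P F₀ ∧ v ∈ F₀ ∧ x ∉ F₀) ∧
    (∀ F₀, IsFacet P F₀ → v ∈ F₀ → x ∉ F₀ →
      {F | IsFacet P F ∧ (u ∈ F ∨ segment ℝ v x ⊆ F)} =
        {F | IsFacet P F ∧ (u ∈ F ∨ v ∈ F)} \ {F₀}) ∧
    {F | IsFacet P F ∧ (u ∈ F ∨ segment ℝ v x ⊆ F)}.ncard = 2 * d - 1 := by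
  obtain ⟨S, hPS⟩ := id hP
  have hconv : Convex ℝ P := hPS ▸ convex_convexHull ℝ _
  have hfin := finite_setOf_isFacet hPS
  obtain ⟨F₀, hF₀, hF₀_unique⟩ :=
    hsimple.existsUnique_isFacet_mem_notMem hP (by omega) hv hadj
  obtain ⟨G₀, -, hG₀_unique⟩ :=
    hsimple.existsUnique_isFacet_mem_notMem hP (by omega) hx hadj.symm
  have hset := setOf_isFacet_mem_or_segment_subset_eq hconv hcomp hF₀ hF₀_unique
  refine ⟨?_, fun ⟨F, hF, huF, hvF, _⟩ => hcomp F hF ⟨huF, hvF⟩, ⟨F₀, hF₀, hF₀_unique⟩,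
    fun F₀' hF₀' hvF₀' hxF₀' => ?_, ?_⟩
  · have hsub : {F | IsFacet P F ∧ u ∈ F ∧ x ∈ F} ⊆ {G₀} := fun F hF =>
      hG₀_unique F ⟨hF.1, hF.2.2, fun hvF => hcomp F hF.1 ⟨hF.2.1, hvF⟩⟩
    exact (Set.ncard_le_ncard hsub).trans (ncard_singleton G₀).le
  · rwa [hF₀_unique F₀' ⟨hF₀', hvF₀', hxF₀'⟩]
  · have hF₀mem : F₀ ∈ {F | IsFacet P F ∧ (u ∈ F ∨ v ∈ F)} := ⟨hF₀.1, .inr hF₀.2.1⟩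
    rw [hset, Set.ncard_sdiff_singleton_of_mem hF₀mem, hcomp.ncard_setOf_isFacet_mem_or_mem hfin,
      hsimple u hu, hsimple v hv, hdim]
    omega

theorem stmt7 {n d : ℕ} (hd : 1 < d) (P : Set (Fin n → ℝ))
    (hP : IsPolytope P) (hdim : sdim P = d) (hsimple : IsSimplePolytope P)
    (u v : Fin n → ℝ) (hu : IsVertex P u) (hv : IsVertex P v) (huv : u ≠ v)
    (hcomp : Complementary P u v)
    (x : Fin n → ℝ) (hx : IsVertex P x) (hadj : Adjacent P v x) :
    {F | IsFacet P F ∧ u ∈ F ∧ x ∈ F}.ncard ≤ 1 ∧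
    (¬ ∃ F, IsFacet P F ∧ u ∈ F ∧ v ∈ F ∧ x ∈ F) ∧
    (∃! F₀, IsFacet P F₀ ∧ v ∈ F₀ ∧ x ∉ F₀) ∧
    (∀ F₀, IsFacet P F₀ → v ∈ F₀ → x ∉ F₀ →
      {F | IsFacet P F ∧ (u ∈ F ∨ segment ℝ v x ⊆ F)} =
        {F | IsFacet P F ∧ (u ∈ F ∨ v ∈ F)} \ {F₀}) ∧
    {F | IsFacet P F ∧ (u ∈ F ∨ segment ℝ v x ⊆ F)}.ncard = 2 * d - 1 :=
  stmt7_general hd P hP hdim hsimple u v hu hv hcomp x hx hadj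
end
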